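/- In the setting of the three-quantizer error formula, assume additionally: constants M_0, M_1, M_2, M_3, M_4 > 0, 0 < ρ̄ ≤ ρ < 1 with ‖C R^ℓ‖ ≤ M_0 ρ^ℓ, ‖C R̄^ℓ L‖ ≤ M_1 ρ̄^ℓ, ‖K R̄^ℓ L‖ ≤ M_2 ρ̄^ℓ, ‖C R^ℓ B_d‖ ≤ M_3 ρ^ℓ, ‖C R^ℓ L‖ ≤ M_4 ρ^ℓ for all ℓ (where R := A_d − LC, R̄ := A_d − B_dK); integers N, N_1, N_2 ≥ 2; x̂_0 = 0 and |e_0|_∞ ≤ E_st; a sequence E : ℕ → ℝ with μ_j := E_j/N such that for all j: |y_j − q_j|_∞ ≤ μ_j, |q_j − v_j|_∞ ≤ (N−1)μ_j, |ŷ_j − v_j|_∞ ≤ E_{1,j}/N_1, and |u_j − w_j|_∞ ≤ E_{2,j}/N_2, where E_{1,j} := ((N−1)M_1/N) Σ_{ℓ=0}^{j−1} ρ̄^ℓ E_{j−ℓ−1} and E_{2,j} := ((N−1)M_2/N) Σ_{ℓ=0}^{j−1} ρ̄^ℓ E_{j−ℓ−1}. Set M := (N−1)(M_1 M_4/N_1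 + M_2 M_3/N_2). Then for every k ≥ 0: |y_{k+1} − v_{k+1}|_∞ ≤ M_0 E_st ρ^{k+1} + (M_4 + (N−1)M_1/N_1) Σ_{ℓ=0}^{k} ρ^ℓ μ_{k−ℓ} + M Σ_{ℓ=0}^{k−1} Σ_{i=0}^{k−ℓ−1} ρ^{ℓ+i} μ_{k−ℓ−i−1}. -/

import Mathlib

/-!
Writing `e = x - x̂` for the estimation error, the plant and the controller give
`e_{k+1} = R e_k + L(y_k - q_k) - L(ŷ_k - v_k) - B_d(u_k - w_k)`, so `e_{k+1}` is `R^{k+1} e_0`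
plus a discrete convolution of the powers of `R` with the three quantization errors.
Applying `C` and splitting `y_{k+1} - v_{k+1} = C e_{k+1} + (ŷ_{k+1} - v_{k+1})`, every piece
is bounded through the decay estimates of `C R^ℓ`, `C R^ℓ L`, `C R^ℓ B_d`. The controller-side
errors `ŷ - v` and `u - w` are themselves geometric convolutions of `μ` with ratio `ρ̄ ≤ ρ`;
replacing `ρ̄` by `ρ` and nesting the two convolutions gives the double sum.
-/

/-- The operator norm of a matrix induced by the `ℓ∞` (max) norms on
vectors, i.e. `‖M‖ = sup {|Mv|_∞ : |v|_∞ = 1}`. -/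
noncomputable def opNorm {m n : ℕ} (M : Matrix (Fin m) (Fin n) ℝ) : ℝ :=
  ‖LinearMap.toContinuousLinearMap (Matrix.mulVecLin M)‖

section

open Finset Matrix

def geomConv (r : ℝ) (μ : ℕ → ℝ) (j : ℕ) : ℝ :=
  ∑ ℓ ∈ range j, r ^ ℓ * μ (j - ℓ - 1)

@[simp]
lemma geomConv_zero (r : ℝ) (μ : ℕ → ℝ) : geomConv r μ 0 = 0 := by
  simp [geomConv]

lemma geomConv_succ (r : ℝ) (μ : ℕ → ℝ) (k : ℕ) :
    geomConv r μ (k + 1) = ∑ ℓ ∈ range (k + 1), r ^ ℓ * μ (k - ℓ) := by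
  refine sum_congr rfl fun ℓ _ ↦ ?_
  rw [Nat.sub_right_comm, Nat.add_sub_cancel]

lemma geomConv_div (r c : ℝ) (E : ℕ → ℝ) (j : ℕ) :
    geomConv r (fun i ↦ E i / c) j = geomConv r E j / c := by
  simp only [geomConv, sum_div, mul_div_assoc]

lemma geomConv_le_geomConv {r s : ℝ} {μ : ℕ → ℝ} (hr : 0 ≤ r) (hrs : r ≤ s)
    (hμ : ∀ j, 0 ≤ μ j) (j : ℕ) : geomConv r μ j ≤ geomConv s μ j := by
  unfold geomConv
  gcongr with ℓ
  exact hμ _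

lemma sum_pow_mul_geomConv_le {r s : ℝ} {μ : ℕ → ℝ} (hr : 0 ≤ r) (hrs : r ≤ s)
    (hμ : ∀ j, 0 ≤ μ j) (k : ℕ) :
    ∑ ℓ ∈ range (k + 1), s ^ ℓ * geomConv r μ (k - ℓ) ≤
      ∑ ℓ ∈ range k, ∑ i ∈ range (k - ℓ), s ^ (ℓ + i) * μ (k - ℓ - i - 1) := by
  rw [sum_range_succ, Nat.sub_self, geomConv_zero, mul_zero, add_zero]
  gcongr with ℓ
  calc s ^ ℓ * geomConv r μ (k - ℓ) ≤ s ^ ℓ * geomConv s μ (k - ℓ) :=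
        mul_le_mul_of_nonneg_left (geomConv_le_geomConv hr hrs hμ _) (pow_nonneg (hr.trans hrs) ℓ)
    _ = _ := by simp only [geomConv, mul_sum, pow_add, mul_assoc]

lemma sum_pow_mul_add_geomConv_le {r s a c M : ℝ} {μ : ℕ → ℝ} (hr : 0 ≤ r) (hrs : r ≤ s)
    (hμ : ∀ j, 0 ≤ μ j) (hc : 0 ≤ c) (hM : 0 ≤ M) (k : ℕ) :
    ∑ ℓ ∈ range (k + 1), s ^ ℓ * (a * μ (k - ℓ) + M * geomConv r μ (k - ℓ))
        + c * geomConv r μ (k + 1) ≤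
      (a + c) * ∑ ℓ ∈ range (k + 1), s ^ ℓ * μ (k - ℓ)
        + M * ∑ ℓ ∈ range k, ∑ i ∈ range (k - ℓ), s ^ (ℓ + i) * μ (k - ℓ - i - 1) := by
  have hsplit : ∑ ℓ ∈ range (k + 1), s ^ ℓ * (a * μ (k - ℓ) + M * geomConv r μ (k - ℓ)) =
      a * ∑ ℓ ∈ range (k + 1), s ^ ℓ * μ (k - ℓ)
        + M * ∑ ℓ ∈ range (k + 1), s ^ ℓ * geomConv r μ (k - ℓ) := by
    simp only [mul_sum, ← sum_add_distrib]
    exact sum_congr rfl fun _ _ ↦ by ring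
  have hlast : geomConv r μ (k + 1) ≤ ∑ ℓ ∈ range (k + 1), s ^ ℓ * μ (k - ℓ) :=
    (geomConv_le_geomConv hr hrs hμ _).trans_eq (geomConv_succ s μ k)
  rw [hsplit]
  linarith [mul_le_mul_of_nonneg_left (sum_pow_mul_geomConv_le hr hrs hμ k) hM,
    mul_le_mul_of_nonneg_left hlast hc]

theorem eq_pow_mulVec_add_sum_of_recurrence {ι α : Type*} [Fintype ι] [DecidableEq ι]
    [Semiring α] (R : Matrix ι ι α) {e d : ℕ → ι → α}
    (he : ∀ k, e (k + 1) = R *ᵥ e k + d k) (k : ℕ) :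
    e (k + 1) = R ^ (k + 1) *ᵥ e 0 + ∑ ℓ ∈ range (k + 1), R ^ ℓ *ᵥ d (k - ℓ) := by
  induction k with
  | zero => simp [he]
  | succ k ih =>
    rw [he, ih, mulVec_add, mulVec_mulVec, ← pow_succ', mulVec_sum,
      sum_range_succ' (fun ℓ ↦ R ^ ℓ *ᵥ d (k + 1 - ℓ))]
    simp only [mulVec_mulVec, ← pow_succ', pow_zero, one_mulVec, Nat.add_sub_add_right,
      Nat.sub_zero, add_assoc]

lemma norm_mulVec_le_of_recurrence {ι κ : Type*} [Fintype ι] [DecidableEq ι] [Fintype κ]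
    (C : Matrix κ ι ℝ) (R : Matrix ι ι ℝ) {e d : ℕ → ι → ℝ}
    (he : ∀ k, e (k + 1) = R *ᵥ e k + d k) (k : ℕ) :
    ‖C *ᵥ e (k + 1)‖ ≤
      ‖(C * R ^ (k + 1)) *ᵥ e 0‖ + ∑ ℓ ∈ range (k + 1), ‖(C * R ^ ℓ) *ᵥ d (k - ℓ)‖ := by
  rw [eq_pow_mulVec_add_sum_of_recurrence R he, mulVec_add, mulVec_sum, mulVec_mulVec]
  simp only [mulVec_mulVec]
  exact (norm_add_le _ _).trans (add_le_add le_rfl (norm_sum_le _ _))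

lemma norm_mulVec_le_of_opNorm_le {m n : ℕ} {A : Matrix (Fin m) (Fin n) ℝ} {v : Fin n → ℝ}
    {a b : ℝ} (hA : opNorm A ≤ a) (hv : ‖v‖ ≤ b) : ‖A *ᵥ v‖ ≤ a * b :=
  calc ‖A *ᵥ v‖ ≤ opNorm A * ‖v‖ := (LinearMap.toContinuousLinearMap (mulVecLin A)).le_opNorm v
    _ ≤ a * b := mul_le_mul hA hv (norm_nonneg v) ((norm_nonneg _).trans hA)

/-- `L (y - q) - L (ŷ - v) - B_d (u - w)` with `y = C x`, `ŷ = C x̂`, `u = -K x̂`. -/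
def quantizationDisturbance {ι κ ν α : Type*} [Fintype ι] [Fintype κ] [Fintype ν] [Ring α]
    (Bd : Matrix ι κ α) (C : Matrix ν ι α) (K : Matrix κ ι α) (L : Matrix ι ν α)
    (x xhat : ι → α) (q v : ν → α) (w : κ → α) : ι → α :=
  L *ᵥ (C *ᵥ x - q) - L *ᵥ (C *ᵥ xhat - v) - Bd *ᵥ (-(K *ᵥ xhat) - w)

lemma plant_sub_controller_eq {ι κ ν α : Type*} [Fintype ι] [Fintype κ] [Fintype ν]
    [Ring α] (Ad : Matrix ι ι α) (Bd : Matrix ι κ α) (C : Matrix ν ι α)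
    (K : Matrix κ ι α) (L : Matrix ι ν α) (x xhat : ι → α) (q v : ν → α) (w : κ → α) :
    (Ad *ᵥ x + Bd *ᵥ w) - (Ad *ᵥ xhat - Bd *ᵥ (K *ᵥ xhat) + L *ᵥ (q - v)) =
      (Ad - L * C) *ᵥ (x - xhat) + quantizationDisturbance Bd C K L x xhat q v w := by
  simp only [quantizationDisturbance, sub_mulVec, mulVec_sub, mulVec_neg, ← mulVec_mulVec]
  abel

lemma norm_mulVec_quantizationDisturbance_le {n m p r : ℕ} {Bd : Matrix (Fin n) (Fin m) ℝ}
    {C : Matrix (Fin p) (Fin n) ℝ} {K : Matrix (Fin m) (Fin n) ℝ} {L : Matrix (Fin n) (Fin p) ℝ}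
    {G : Matrix (Fin r) (Fin n) ℝ} {x xhat : Fin n → ℝ} {q v : Fin p → ℝ} {w : Fin m → ℝ}
    {α β a b c : ℝ} (hL : opNorm (G * L) ≤ α) (hB : opNorm (G * Bd) ≤ β)
    (hyq : ‖C *ᵥ x - q‖ ≤ a) (hyhatv : ‖C *ᵥ xhat - v‖ ≤ b) (huw : ‖-(K *ᵥ xhat) - w‖ ≤ c) :
    ‖G *ᵥ quantizationDisturbance Bd C K L x xhat q v w‖ ≤ α * a + α * b + β * c := by
  simp only [quantizationDisturbance, mulVec_sub G, mulVec_mulVec _ G]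
  refine (norm_sub_le _ _).trans (add_le_add ((norm_sub_le _ _).trans (add_le_add ?_ ?_)) ?_)
  exacts [norm_mulVec_le_of_opNorm_le hL hyq, norm_mulVec_le_of_opNorm_le hL hyhatv,
    norm_mulVec_le_of_opNorm_le hB huw]

end

theorem three_quantizer_output_center_bound_general
    {n m p : ℕ}
    (Ad : Matrix (Fin n) (Fin n) ℝ) (Bd : Matrix (Fin n) (Fin m) ℝ)
    (C : Matrix (Fin p) (Fin n) ℝ) (K : Matrix (Fin m) (Fin n) ℝ)
    (L : Matrix (Fin n) (Fin p) ℝ)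
    (R : Matrix (Fin n) (Fin n) ℝ)
    (hR : R = Ad - L * C)
    (M₀ M₁ M₂ M₃ M₄ ρ ρbar : ℝ)
    (hM₁ : 0 < M₁) (hM₂ : 0 < M₂) (hM₃ : 0 < M₃) (hM₄ : 0 < M₄)
    (hρbar : 0 < ρbar) (hρρbar : ρbar ≤ ρ)
    (hCR : ∀ ℓ : ℕ, opNorm (C * R ^ ℓ) ≤ M₀ * ρ ^ ℓ)
    (hCRB : ∀ ℓ : ℕ, opNorm (C * R ^ ℓ * Bd) ≤ M₃ * ρ ^ ℓ)
    (hCRL : ∀ ℓ : ℕ, opNorm (C * R ^ ℓ * L) ≤ M₄ * ρ ^ ℓ)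
    (N N₁ N₂ : ℕ) (hN : 2 ≤ N)
    (x xhat : ℕ → Fin n → ℝ) (q v : ℕ → Fin p → ℝ) (w : ℕ → Fin m → ℝ)
    (Est : ℝ) (he0 : ‖x 0 - xhat 0‖ ≤ Est)
    (hx : ∀ k : ℕ, x (k + 1) = Ad.mulVec (x k) + Bd.mulVec (w k))
    (hxhat : ∀ k : ℕ,
      xhat (k + 1) = Ad.mulVec (xhat k) - Bd.mulVec (K.mulVec (xhat k))
        + L.mulVec (q k - v k))
    (E : ℕ → ℝ) (μ : ℕ → ℝ) (hμ : ∀ j : ℕ, μ j = E j / N)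
    (E₁ E₂ : ℕ → ℝ)
    (hE₁ : ∀ j : ℕ, E₁ j =
      (((N : ℝ) - 1) * M₁ / N) * ∑ ℓ ∈ Finset.range j, ρbar ^ ℓ * E (j - ℓ - 1))
    (hE₂ : ∀ j : ℕ, E₂ j =
      (((N : ℝ) - 1) * M₂ / N) * ∑ ℓ ∈ Finset.range j, ρbar ^ ℓ * E (j - ℓ - 1))
    (hyq : ∀ j : ℕ, ‖C.mulVec (x j) - q j‖ ≤ μ j)
    (hyhatv : ∀ j : ℕ, ‖C.mulVec (xhat j) - v j‖ ≤ E₁ j / N₁)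
    (huw : ∀ j : ℕ, ‖(-(K.mulVec (xhat j))) - w j‖ ≤ E₂ j / N₂)
    (M : ℝ)
    (hMdef : M = ((N : ℝ) - 1) * (M₁ * M₄ / (N₁ : ℝ) + M₂ * M₃ / (N₂ : ℝ))) :
    ∀ k : ℕ,
      ‖C.mulVec (x (k + 1)) - v (k + 1)‖ ≤
        M₀ * Est * ρ ^ (k + 1)
        + (M₄ + ((N : ℝ) - 1) * M₁ / (N₁ : ℝ)) *
            ∑ ℓ ∈ Finset.range (k + 1), ρ ^ ℓ * μ (k - ℓ)
        + M * ∑ ℓ ∈ Finset.range k, ∑ i ∈ Finset.range (k - ℓ),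
            ρ ^ (ℓ + i) * μ (k - ℓ - i - 1) := by
  intro k
  have hN₀ : (0 : ℝ) ≤ N - 1 := sub_nonneg.2 (by exact_mod_cast (by omega : 1 ≤ N))
  have hconv (j : ℕ) :
      (∑ ℓ ∈ Finset.range j, ρbar ^ ℓ * E (j - ℓ - 1)) / N = geomConv ρbar μ j := by
    rw [show μ = _ from funext hμ, geomConv_div]; rfl
  set d := fun j ↦ quantizationDisturbance Bd C K L (x j) (xhat j) (q j) (v j) (w j)
  have herr (j : ℕ) : x (j + 1) - xhat (j + 1) = R.mulVec (x j - xhat j) + d j := by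
    rw [hx, hxhat, hR]
    exact plant_sub_controller_eq Ad Bd C K L _ _ _ _ _
  have hd (ℓ j : ℕ) :
      ‖(C * R ^ ℓ).mulVec (d j)‖ ≤ ρ ^ ℓ * (M₄ * μ j + M * geomConv ρbar μ j) := by
    refine (norm_mulVec_quantizationDisturbance_le (hCRL ℓ) (hCRB ℓ) (hyq j) (hyhatv j)
      (huw j)).trans_eq ?_
    rw [hE₁, hE₂, hMdef, ← hconv]; ring
  have hcenter : ‖C.mulVec (xhat (k + 1)) - v (k + 1)‖ ≤
      ((N : ℝ) - 1) * M₁ / N₁ * geomConv ρbar μ (k + 1) := by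
    refine (hyhatv _).trans_eq ?_
    rw [hE₁, ← hconv]; ring
  have hscalar := sum_pow_mul_add_geomConv_le (a := M₄) (c := ((N : ℝ) - 1) * M₁ / N₁) (M := M)
    hρbar.le hρρbar (fun j ↦ (norm_nonneg _).trans (hyq j)) (by positivity)
    (by rw [hMdef]; positivity) k
  calc ‖C.mulVec (x (k + 1)) - v (k + 1)‖
      ≤ ‖C.mulVec (x (k + 1) - xhat (k + 1))‖ + ‖C.mulVec (xhat (k + 1)) - v (k + 1)‖ := by
        rw [Matrix.mulVec_sub]; exact norm_sub_le_norm_sub_add_norm_sub _ _ _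
    _ ≤ M₀ * ρ ^ (k + 1) * Est
          + ∑ ℓ ∈ Finset.range (k + 1), ρ ^ ℓ * (M₄ * μ (k - ℓ) + M * geomConv ρbar μ (k - ℓ))
          + ((N : ℝ) - 1) * M₁ / N₁ * geomConv ρbar μ (k + 1) := by
        refine add_le_add ?_ hcenter
        refine (norm_mulVec_le_of_recurrence C R (e := fun j ↦ x j - xhat j) herr k).trans ?_
        exact add_le_add (norm_mulVec_le_of_opNorm_le (hCR _) he0)
          (Finset.sum_le_sum fun ℓ _ ↦ hd ℓ _)
    _ ≤ _ := by linarith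

/-- Key intermediate bound in the proof of Theorem 3: the distance between
the plant output `y_{k+1} = C x_{k+1}` and the quantization center
`v_{k+1} = Q₁(ŷ_{k+1})` is bounded by the triple-constant formula. -/
theorem three_quantizer_output_center_bound
    {n m p : ℕ}
    (Ad : Matrix (Fin n) (Fin n) ℝ) (Bd : Matrix (Fin n) (Fin m) ℝ)
    (C : Matrix (Fin p) (Fin n) ℝ) (K : Matrix (Fin m) (Fin n) ℝ)
    (L : Matrix (Fin n) (Fin p) ℝ)
    (R Rbar : Matrix (Fin n) (Fin n) ℝ)
    (hR : R = Ad - L * C) (hRbar : Rbar = Ad - Bd * K)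
    (M₀ M₁ M₂ M₃ M₄ ρ ρbar : ℝ)
    (hM₀ : 0 < M₀) (hM₁ : 0 < M₁) (hM₂ : 0 < M₂) (hM₃ : 0 < M₃) (hM₄ : 0 < M₄)
    (hρbar : 0 < ρbar) (hρρbar : ρbar ≤ ρ) (hρ : ρ < 1)
    (hCR : ∀ ℓ : ℕ, opNorm (C * R ^ ℓ) ≤ M₀ * ρ ^ ℓ)
    (hCRbarL : ∀ ℓ : ℕ, opNorm (C * Rbar ^ ℓ * L) ≤ M₁ * ρbar ^ ℓ)
    (hKRbarL : ∀ ℓ : ℕ, opNorm (K * Rbar ^ ℓ * L) ≤ M₂ * ρbar ^ ℓ)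
    (hCRB : ∀ ℓ : ℕ, opNorm (C * R ^ ℓ * Bd) ≤ M₃ * ρ ^ ℓ)
    (hCRL : ∀ ℓ : ℕ, opNorm (C * R ^ ℓ * L) ≤ M₄ * ρ ^ ℓ)
    (N N₁ N₂ : ℕ) (hN : 2 ≤ N) (hN₁ : 2 ≤ N₁) (hN₂ : 2 ≤ N₂)
    (x xhat : ℕ → Fin n → ℝ) (q v : ℕ → Fin p → ℝ) (w : ℕ → Fin m → ℝ)
    (hxhat0 : xhat 0 = 0)
    (Est : ℝ) (he0 : ‖x 0 - xhat 0‖ ≤ Est)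
    (hx : ∀ k : ℕ, x (k + 1) = Ad.mulVec (x k) + Bd.mulVec (w k))
    (hxhat : ∀ k : ℕ,
      xhat (k + 1) = Ad.mulVec (xhat k) - Bd.mulVec (K.mulVec (xhat k))
        + L.mulVec (q k - v k))
    (E : ℕ → ℝ) (μ : ℕ → ℝ) (hμ : ∀ j : ℕ, μ j = E j / N)
    (E₁ E₂ : ℕ → ℝ)
    (hE₁ : ∀ j : ℕ, E₁ j =
      (((N : ℝ) - 1) * M₁ / N) * ∑ ℓ ∈ Finset.range j, ρbar ^ ℓ * E (j - ℓ - 1))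
    (hE₂ : ∀ j : ℕ, E₂ j =
      (((N : ℝ) - 1) * M₂ / N) * ∑ ℓ ∈ Finset.range j, ρbar ^ ℓ * E (j - ℓ - 1))
    (hyq : ∀ j : ℕ, ‖C.mulVec (x j) - q j‖ ≤ μ j)
    (hqv : ∀ j : ℕ, ‖q j - v j‖ ≤ ((N : ℝ) - 1) * μ j)
    (hyhatv : ∀ j : ℕ, ‖C.mulVec (xhat j) - v j‖ ≤ E₁ j / N₁)
    (huw : ∀ j : ℕ, ‖(-(K.mulVec (xhat j))) - w j‖ ≤ E₂ j / N₂)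
    (M : ℝ)
    (hMdef : M = ((N : ℝ) - 1) * (M₁ * M₄ / (N₁ : ℝ) + M₂ * M₃ / (N₂ : ℝ))) :
    ∀ k : ℕ,
      ‖C.mulVec (x (k + 1)) - v (k + 1)‖ ≤
        M₀ * Est * ρ ^ (k + 1)
        + (M₄ + ((N : ℝ) - 1) * M₁ / (N₁ : ℝ)) *
            ∑ ℓ ∈ Finset.range (k + 1), ρ ^ ℓ * μ (k - ℓ)
        + M * ∑ ℓ ∈ Finset.range k, ∑ i ∈ Finset.range (k - ℓ),
            ρ ^ (ℓ + i) * μ (k - ℓ - i - 1) :=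
  three_quantizer_output_center_bound_general Ad Bd C K L R hR M₀ M₁ M₂ M₃ M₄ ρ ρbar hM₁ hM₂ hM₃ hM₄
    hρbar hρρbar hCR hCRB hCRL N N₁ N₂ hN x xhat q v w Est he0 hx hxhat E μ hμ E₁ E₂ hE₁ hE₂ hyq
    hyhatv huw M hMdef
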